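/- Let f : ℝ → ℝ be smooth, k ≥ 1, and let (x′_n) and (x″_n) be sequences with the same initial value x′_0 = x″_0 that satisfy the recurrences x′_{n+1} = x′_n + k·(1/f)^{(k−1)}(x′_n)/(1/f)^{(k)}(x′_n) and x″_{n+1} = x″_n − f(x″_n)·A_{k−1}(x″_n)/A_k(x″_n). Assume that for every n, f(x″_n) ≠ 0 and A_k(x″_n) ≠ 0. Then x′_n = x″_n for all n; consequently, if a constant C satisfies |x″_{n+1} − α| ≤ C·|x″_n − α|^{k+1} for a root α of f, then the same C satisfies |x′_{n+1} − α| ≤ C·|x′_n − α|^{k+1}. -/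

import Mathlib

/-- The functions `A j` from the proposed root-finding method:
`A 0 = 1`, `A 1 = f'`, `A 2 = (f')² - (1/2) f'' f`, and
`A (j+1) = f' * A j - f * Âⱼ` where
`Âⱼ = ∑_{l=2}^{j+1} (1/l!) (-f)^{l-2} f⁽ˡ⁾ A_{j+1-l}`
(here the inner sum is reindexed by `l = m + 2`). -/
noncomputable def A (f : ℝ → ℝ) : ℕ → ℝ → ℝ
  | 0, _ => 1
  | (j+1), x =>
      deriv f x * A f j x -
        f x * ∑ m ∈ Finset.range j,
          (((m+2).factorial : ℝ))⁻¹ * (-f x) ^ m * iteratedDeriv (m+2) f x *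
            A f (j - 1 - m) x
  termination_by j _ => j
  decreasing_by all_goals omega

theorem diffg {f : ℝ → ℝ} (hf : ContDiff ℝ (⊤ : ℕ∞) f) (m : ℕ) {x : ℝ} (hx : f x ≠ 0) :
    DifferentiableAt ℝ (iteratedDeriv m (fun y => 1 / f y)) x := by
  set s : Set ℝ := {y | f y ≠ 0} with hs
  have hso : IsOpen s := isOpen_compl_singleton.preimage hf.continuous
  have hgs : ContDiffOn ℝ (⊤ : ℕ∞) (fun y => 1 / f y) s :=
    contDiffOn_const.div hf.contDiffOn (fun y hy => hy)
  have heq : Set.EqOn (iteratedDerivWithin m (fun y => 1 / f y) s)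
      (iteratedDeriv m (fun y => 1 / f y)) s := by
    intro y hy
    rw [iteratedDerivWithin_eq_iteratedFDerivWithin, iteratedDeriv_eq_iteratedFDeriv,
      iteratedFDerivWithin_of_isOpen m hso hy]
  have h1 : DifferentiableWithinAt ℝ (iteratedDerivWithin m (fun y => 1 / f y) s) s x :=
    hgs.differentiableOn_iteratedDerivWithin
      (by exact_mod_cast (by simp : (m:ℕ∞) < ⊤)) hso.uniqueDiffOn x hx
  have hmem : s ∈ nhds x := hso.mem_nhds hx
  have h2 : DifferentiableAt ℝ (iteratedDerivWithin m (fun y => 1 / f y) s) x :=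
    h1.differentiableAt hmem
  exact (Filter.eventuallyEq_of_mem hmem heq).symm.differentiableAt_iff.mpr h2

theorem leib {f : ℝ → ℝ} (hf : ContDiff ℝ (⊤ : ℕ∞) f) :
    ∀ (n : ℕ) (x : ℝ), f x ≠ 0 →
      ∑ l ∈ Finset.range (n+1), (n.choose l : ℝ) * iteratedDeriv l f x *
        iteratedDeriv (n-l) (fun y => 1 / f y) x = if n = 0 then 1 else 0 := by
  intro n
  induction n with
  | zero =>
    intro x hx
    field_simp
    simp [hx]
  | succ n IH =>
    intro x hx
    set g : ℝ → ℝ := fun y => 1 / f y with hg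
    have hso : IsOpen {y : ℝ | f y ≠ 0} := isOpen_compl_singleton.preimage hf.continuous
    have hdf : ∀ l : ℕ, Differentiable ℝ (iteratedDeriv l f) := fun l =>
      hf.differentiable_iteratedDeriv l (by exact_mod_cast (by simp : (l:ℕ∞) < ⊤))
    -- the derivative of the level-n sum is zero
    have hzero : deriv (fun y => ∑ l ∈ Finset.range (n+1),
        (n.choose l : ℝ) * iteratedDeriv l f y * iteratedDeriv (n-l) g y) x = 0 := by
      have hev : (fun y => ∑ l ∈ Finset.range (n+1),
          (n.choose l : ℝ) * iteratedDeriv l f y * iteratedDeriv (n-l) g y)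
          =ᶠ[nhds x] (fun _ => if n = 0 then (1:ℝ) else 0) := by
        filter_upwards [hso.mem_nhds hx] with y hy using IH y hy
      rw [hev.deriv_eq, deriv_const]
    -- expand the derivative
    have hterm : ∀ l ∈ Finset.range (n+1), DifferentiableAt ℝ
        (fun y => (n.choose l : ℝ) * iteratedDeriv l f y * iteratedDeriv (n-l) g y) x := by
      intro l _
      exact (((hdf l).differentiableAt.const_mul _).mul (diffg hf (n-l) hx))
    have hexp : deriv (fun y => ∑ l ∈ Finset.range (n+1),
        (n.choose l : ℝ) * iteratedDeriv l f y * iteratedDeriv (n-l) g y) x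
        = ∑ l ∈ Finset.range (n+1), (n.choose l : ℝ) *
            (iteratedDeriv (l+1) f x * iteratedDeriv (n-l) g x
              + iteratedDeriv l f x * iteratedDeriv (n-l+1) g x) := by
      rw [deriv_fun_sum hterm]
      refine Finset.sum_congr rfl fun l hl => ?_
      have h1 : DifferentiableAt ℝ (fun y => (n.choose l : ℝ) * iteratedDeriv l f y) x :=
        (hdf l).differentiableAt.const_mul _
      rw [deriv_fun_mul h1 (diffg hf (n-l) hx), deriv_const_mul _ (hdf l).differentiableAt]
      rw [← iteratedDeriv_succ, ← iteratedDeriv_succ]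
      ring
    have hkey : ∑ l ∈ Finset.range (n+1), (n.choose l : ℝ) *
        (iteratedDeriv (l+1) f x * iteratedDeriv (n-l) g x
          + iteratedDeriv l f x * iteratedDeriv (n-l+1) g x) = 0 := by
      rw [← hexp, hzero]
    -- binomial reshuffle
    set a : ℕ → ℝ := fun l => iteratedDeriv l f x with ha
    set b : ℕ → ℝ := fun m => iteratedDeriv m g x with hb
    have hD : ∑ l ∈ Finset.range (n+1), (n.choose (l+1) : ℝ) * a (l+1) * b (n-l)
        = ∑ l ∈ Finset.range n, (n.choose (l+1) : ℝ) * a (l+1) * b (n-l) := by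
      rw [Finset.sum_range_succ, Nat.choose_succ_self]; simp
    have hpascal : ∑ l ∈ Finset.range (n+1), ((n+1).choose (l+1) : ℝ) * a (l+1) * b (n-l)
        = (∑ l ∈ Finset.range (n+1), (n.choose l : ℝ) * a (l+1) * b (n-l))
          + ∑ l ∈ Finset.range n, (n.choose (l+1) : ℝ) * a (l+1) * b (n-l) := by
      rw [← hD, ← Finset.sum_add_distrib]
      refine Finset.sum_congr rfl fun l hl => ?_
      rw [Nat.choose_succ_succ]; push_cast; ring
    have hS2 : ∑ l ∈ Finset.range (n+1), (n.choose l : ℝ) * a l * b (n+1-l)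
        = (a 0 * b (n+1)) + ∑ l ∈ Finset.range n, (n.choose (l+1) : ℝ) * a (l+1) * b (n-l) := by
      rw [Finset.sum_range_succ' (fun l => (n.choose l : ℝ) * a l * b (n+1-l)) n]
      simp [Nat.succ_sub_succ]
      ring
    have hT : ∑ l ∈ Finset.range (n+2), ((n+1).choose l : ℝ) * a l * b (n+1-l)
        = a 0 * b (n+1) + ∑ l ∈ Finset.range (n+1), ((n+1).choose (l+1) : ℝ) * a (l+1) * b (n-l) := by
      rw [Finset.sum_range_succ' (fun l => ((n+1).choose l : ℝ) * a l * b (n+1-l)) (n+1)]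
      simp [Nat.succ_sub_succ]
      ring
    have hsplit : ∑ l ∈ Finset.range (n+1), (n.choose l : ℝ)
        * (a (l+1) * b (n-l) + a l * b (n-l+1))
        = (∑ l ∈ Finset.range (n+1), (n.choose l : ℝ) * a (l+1) * b (n-l))
          + ∑ l ∈ Finset.range (n+1), (n.choose l : ℝ) * a l * b (n+1-l) := by
      rw [← Finset.sum_add_distrib]
      refine Finset.sum_congr rfl fun l hl => ?_
      have : n - l + 1 = n + 1 - l := by
        have := Finset.mem_range.mp hl; omega
      rw [this]; ring
    rw [if_neg (Nat.succ_ne_zero n)]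
    calc ∑ l ∈ Finset.range (n+2), ((n+1).choose l : ℝ) * a l * b (n+1-l)
        = a 0 * b (n+1) + ((∑ l ∈ Finset.range (n+1), (n.choose l : ℝ) * a (l+1) * b (n-l))
          + ∑ l ∈ Finset.range n, (n.choose (l+1) : ℝ) * a (l+1) * b (n-l)) := by
          rw [hT, hpascal]
      _ = (∑ l ∈ Finset.range (n+1), (n.choose l : ℝ) * a (l+1) * b (n-l))
          + ∑ l ∈ Finset.range (n+1), (n.choose l : ℝ) * a l * b (n+1-l) := by
          rw [hS2]; ring
      _ = ∑ l ∈ Finset.range (n+1), (n.choose l : ℝ)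
            * (a (l+1) * b (n-l) + a l * b (n-l+1)) := hsplit.symm
      _ = 0 := hkey

theorem key {f : ℝ → ℝ} (hf : ContDiff ℝ (⊤ : ℕ∞) f) :
    ∀ (j : ℕ) (x : ℝ), f x ≠ 0 →
      iteratedDeriv j (fun y => 1 / f y) x
        = -((j.factorial : ℝ) * A f j x) / (-f x) ^ (j+1) := by
  intro j
  induction j using Nat.strong_induction_on with
  | _ j IH =>
  match j with
  | 0 =>
    intro x hx
    simp only [iteratedDeriv_zero, Nat.factorial_zero, Nat.cast_one, pow_one]
    rw [show A f 0 x = 1 from by simp [A]]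
    field_simp
    simp [hx]
  | (m+1) =>
    intro x hx
    have hu : -f x ≠ 0 := neg_ne_zero.mpr hx
    have hlb := leib hf (m+1) x hx
    rw [if_neg (Nat.succ_ne_zero m)] at hlb
    set g : ℝ → ℝ := fun y => 1 / f y with hg
    rw [Finset.sum_range_succ' (fun l => (((m+1).choose l : ℝ)) * iteratedDeriv l f x *
        iteratedDeriv (m+1-l) g x) (m+1)] at hlb
    simp only [Nat.succ_sub_succ, Nat.choose_zero_right, Nat.cast_one, one_mul,
      iteratedDeriv_zero, Nat.sub_zero] at hlb
    -- hlb : ∑ l ∈ range (m+1), C(m+1,l+1) * f^{(l+1)} * g^{(m-l)} + f x * g^{(m+1)} = 0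
    have hS : ∑ l ∈ Finset.range (m+1), (((m+1).choose (l+1) : ℝ)) * iteratedDeriv (l+1) f x *
        iteratedDeriv (m-l) g x
        = -(((m+1).factorial : ℝ) * A f (m+1) x) / (-f x) ^ (m+1) := by
      rw [Finset.sum_range_succ' (fun l => (((m+1).choose (l+1) : ℝ)) * iteratedDeriv (l+1) f x *
          iteratedDeriv (m-l) g x) m]
      have hterm : ∀ i ∈ Finset.range m,
          (((m+1).choose (i+1+1) : ℝ)) * iteratedDeriv (i+1+1) f x * iteratedDeriv (m-(i+1)) g x
          = (-(((m+1).factorial : ℝ) * (-f x)) / (-f x) ^ (m+1)) *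
              ((((i+2).factorial : ℝ))⁻¹ * (-f x) ^ i * iteratedDeriv (i+2) f x *
                A f (m-1-i) x) := by
        intro i hi
        have him : i < m := Finset.mem_range.mp hi
        obtain ⟨p, rfl⟩ : ∃ p, m = p + i + 1 := ⟨m - i - 1, by omega⟩
        have e1 : p + i + 1 - (i + 1) = p := by omega
        have e2 : p + i + 1 - 1 - i = p := by omega
        rw [e1, e2, IH p (by omega) x hx]
        have hc : (((p + i + 1 + 1).factorial : ℝ))
            = (((p + i + 2).choose (i+2) : ℝ)) * ((i+2).factorial : ℝ) * (p.factorial : ℝ) := by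
          have h := Nat.choose_mul_factorial_mul_factorial (show i + 2 ≤ p + i + 2 by omega)
          have e3 : p + i + 2 - (i + 2) = p := by omega
          rw [e3] at h
          have e4 : p + i + 1 + 1 = p + i + 2 := by omega
          rw [e4]
          exact_mod_cast h.symm
        rw [hc]
        have hfac : (((i+2).factorial : ℝ)) ≠ 0 := Nat.cast_ne_zero.mpr (Nat.factorial_ne_zero _)
        have e5 : i + 1 + 1 = i + 2 := by omega
        rw [e5]
        field_simp
        ring
      rw [Finset.sum_congr rfl hterm, ← Finset.mul_sum]
      rw [show (((m+1).choose (0+1) : ℝ)) = ((m:ℝ) + 1) from by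
        rw [Nat.choose_one_right]; push_cast; ring]
      rw [show iteratedDeriv (0+1) f x = deriv f x from by rw [iteratedDeriv_one]]
      rw [show m - 0 = m from rfl, IH m (by omega) x hx]
      rw [show A f (m+1) x = deriv f x * A f m x -
        f x * ∑ i ∈ Finset.range m,
          (((i+2).factorial : ℝ))⁻¹ * (-f x) ^ i * iteratedDeriv (i+2) f x *
            A f (m - 1 - i) x from by rw [A]]
      have hfacm : ((m.factorial : ℝ)) ≠ 0 := Nat.cast_ne_zero.mpr (Nat.factorial_ne_zero _)
      have hfacm1 : (((m+1).factorial : ℝ)) = ((m:ℝ)+1) * (m.factorial : ℝ) := by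
        rw [Nat.factorial_succ]; push_cast; ring
      rw [hfacm1]
      field_simp
      ring
    -- combine
    have hb : f x * iteratedDeriv (m+1) g x = ((m+1).factorial : ℝ) * A f (m+1) x / (-f x) ^ (m+1) := by
      rw [hS] at hlb
      have := hlb
      field_simp at this ⊢
      linarith [this]
    have hpow : (-f x) ^ (m+1+1) = (-f x) ^ (m+1) * (-f x) := pow_succ _ _
    rw [eq_div_iff (pow_ne_zero _ hu)]
    rw [hpow]
    have : iteratedDeriv (m+1) g x * ((-f x) ^ (m+1) * (-f x)) =
        -(f x * iteratedDeriv (m+1) g x) * (-f x)^(m+1) * (-1) * (-1) := by ring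
    rw [this, hb]
    field_simp

/-- Householder's sequence and the proposed sequence coincide, so any
convergence-factor estimate for the proposed method transfers to
Householder's method. -/
theorem householder_seq_eq_proposed_seq
    (f : ℝ → ℝ) (hf : ContDiff ℝ (⊤ : ℕ∞) f) (k : ℕ) (hk : 1 ≤ k)
    (x' x'' : ℕ → ℝ) (h0 : x' 0 = x'' 0)
    (hx' : ∀ n, x' (n + 1) =
      x' n + (k : ℝ) * iteratedDeriv (k - 1) (fun y => 1 / f y) (x' n) /
        iteratedDeriv k (fun y => 1 / f y) (x' n))
    (hx'' : ∀ n, x'' (n + 1) =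
      x'' n - f (x'' n) * A f (k - 1) (x'' n) / A f k (x'' n))
    (hne : ∀ n, f (x'' n) ≠ 0 ∧ A f k (x'' n) ≠ 0) :
    (∀ n, x' n = x'' n) ∧
      ∀ (C : ℝ) (α : ℝ), f α = 0 →
        (∀ n, |x'' (n + 1) - α| ≤ C * |x'' n - α| ^ (k + 1)) →
        ∀ n, |x' (n + 1) - α| ≤ C * |x' n - α| ^ (k + 1) := by
  obtain ⟨k', rfl⟩ : ∃ k', k = k' + 1 := ⟨k - 1, by omega⟩
  have main : ∀ n, x' n = x'' n := by
    intro n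
    induction n with
    | zero => exact h0
    | succ n ih =>
      rw [hx' n, hx'' n, ih]
      set x := x'' n with hxdef
      obtain ⟨hfx, hA⟩ := hne n
      have hu : -f x ≠ 0 := neg_ne_zero.mpr hfx
      have e0 : k' + 1 - 1 = k' := by omega
      rw [e0]
      have key2 : ((k' + 1 : ℕ) : ℝ) * iteratedDeriv k' (fun y => 1 / f y) x /
          iteratedDeriv (k' + 1) (fun y => 1 / f y) x
          = -(f x * A f k' x / A f (k' + 1) x) := by
        rw [key hf k' x hfx, key hf (k' + 1) x hfx]
        have hAk1 : A f (k' + 1) x ≠ 0 := hA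
        have hfac : ((k'.factorial : ℝ)) ≠ 0 := Nat.cast_ne_zero.mpr (Nat.factorial_ne_zero _)
        have hfacs : (((k' + 1).factorial : ℝ)) = ((k' : ℝ) + 1) * (k'.factorial : ℝ) := by
          rw [Nat.factorial_succ]; push_cast; ring
        rw [hfacs]
        have hk1 : ((k' : ℝ) + 1) ≠ 0 := by positivity
        field_simp
        push_cast
        ring
      rw [key2]
      ring
  refine ⟨main, fun C α hα hC n => ?_⟩
  rw [main (n + 1), main n]
  exact hC n
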